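/- Let ψ be an n-qubit state (a tensor ψ : (Fin n → Fin 2) → ℂ), and let φ^{(a,b)}, φ^{(b,c)} be 2×2 matrices (a, b, c distinct indices). If ∑_{α_a,α_b} φ^{(a,b)}_{α_a,α_b} ψ = 0 and ∑_{α_b,α_c} φ^{(b,c)}_{α_b,α_c} ψ = 0 (contracting the indicated indices, for all values of the remaining indices), then the tensor ψ also satisfies ∑_{α_a,α_c} ω_{α_a,α_c} ψ = 0, where ω = φ^{(a,b)} ε φ^{(b,c)} with ε the antisymmetric 2×2 matrix. -/

import Mathlib

/-!
Freeze every qubit except `a`, `b`, `c`; the constraints become statements about a three-index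
tensor `Ψ s u t`. Since `(φab * ε * φbc) s t = φab s 0 * φbc 1 t - φab s 1 * φbc 0 t`, the
`φab`-constraint moves the middle index of `Ψ` from one value to the other, after which the
`ω`-contraction becomes a combination of `φbc`-constraints.
-/

open Finset

section ThreeQubits

variable {R : Type*} [CommRing R]

def epsilon : Matrix (Fin 2) (Fin 2) R := !![0, 1; -1, 0]

lemma mul_epsilon_mul_apply (A B : Matrix (Fin 2) (Fin 2) R) (s t : Fin 2) :
    (A * epsilon * B : Matrix (Fin 2) (Fin 2) R) s t = A s 0 * B 1 t - A s 1 * B 0 t := by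
  simp [epsilon, Matrix.mul_apply, Fin.sum_univ_two]
  ring

theorem sum_mul_epsilon_mul_contract_eq_zero (A B : Matrix (Fin 2) (Fin 2) R)
    (Ψ : Fin 2 → Fin 2 → Fin 2 → R)
    (hA : ∀ t, ∑ s, ∑ u, A s u * Ψ s u t = 0)
    (hB : ∀ s, ∑ u, ∑ t, B u t * Ψ s u t = 0) (u : Fin 2) :
    ∑ s, ∑ t, (A * epsilon * B : Matrix (Fin 2) (Fin 2) R) s t * Ψ s u t = 0 := by
  have hA0 := hA 0; have hA1 := hA 1; have hB0 := hB 0; have hB1 := hB 1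
  simp only [mul_epsilon_mul_apply, Fin.sum_univ_two] at hA0 hA1 hB0 hB1 ⊢
  obtain rfl | rfl : u = 0 ∨ u = 1 := by omega
  · linear_combination B 1 0 * hA0 + B 1 1 * hA1 - A 0 1 * hB0 - A 1 1 * hB1
  · linear_combination -B 0 0 * hA0 - B 0 1 * hA1 + A 0 0 * hB0 + A 1 0 * hB1

end ThreeQubits

/-- Generalization of the key lemma to an n-qubit tensor ψ: constraints
φ^{(a,b)} and φ^{(b,c)} generate the constraint ω = φ^{(a,b)} ε φ^{(b,c)}
on the pair (a,c). -/
theorem stmt_1 {n : ℕ} (ψ : (Fin n → Fin 2) → ℂ)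
    (φab φbc ε ω : Matrix (Fin 2) (Fin 2) ℂ)
    (hε : ε = Matrix.of ![![0, 1], ![-1, 0]])
    (a b c : Fin n) (hab : a ≠ b) (hbc : b ≠ c) (hac : a ≠ c)
    (hφab : ∀ x : Fin n → Fin 2,
      ∑ s, ∑ t, φab s t * ψ (Function.update (Function.update x a s) b t) = 0)
    (hφbc : ∀ x : Fin n → Fin 2,
      ∑ s, ∑ t, φbc s t * ψ (Function.update (Function.update x b s) c t) = 0)
    (hω : ω = φab * ε * φbc) :
    ∀ x : Fin n → Fin 2,
      ∑ s, ∑ t, ω s t * ψ (Function.update (Function.update x a s) c t) = 0 := by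
  intro x
  subst hε hω
  set Ψ : Fin 2 → Fin 2 → Fin 2 → ℂ := fun s u t =>
    ψ (Function.update (Function.update (Function.update x a s) b u) c t)
  have hA : ∀ t, ∑ s, ∑ u, φab s u * Ψ s u t = 0 := fun t => by
    simpa only [Function.update_comm hac.symm, Function.update_comm hbc.symm]
      using hφab (Function.update x c t)
  have hB : ∀ s, ∑ u, ∑ t, φbc u t * Ψ s u t = 0 := fun s => hφbc (Function.update x a s)
  have hΨ : ∀ s t, ψ (Function.update (Function.update x a s) c t) = Ψ s (x b) t := by
    intro s t
    rw [← Function.update_of_ne hab.symm s x]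
    simp only [Ψ, Function.update_eq_self]
  simp only [hΨ]
  exact sum_mul_epsilon_mul_contract_eq_zero φab φbc Ψ hA hB (x b)
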